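/- Let α₁ = (0 3 2)(1 4 5)(6 8 9)(7 10 11), α₂ = (0 4)(1 2)(3 5)(6 10)(7 9)(8 11), α₃ = (0 9)(1 11)(2 8)(3 6)(4 7)(5 10) be permutations of {0,…,11}. Then the subgroup generated by {α₁, α₂, α₃} acts transitively on {0,…,11}. -/
import Mathlib


open Equiv

/-- α₁ = (0 3 2)(1 4 5)(6 8 9)(7 10 11) -/
def ko1Alpha1 : Equiv.Perm (Fin 12) :=
  (swap 0 3 * swap 3 2) * (swap 1 4 * swap 4 5) * (swap 6 8 * swap 8 9) *
    (swap 7 10 * swap 10 11)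

/-- α₂ = (0 4)(1 2)(3 5)(6 10)(7 9)(8 11) -/
def ko1Alpha2 : Equiv.Perm (Fin 12) :=
  swap 0 4 * swap 1 2 * swap 3 5 * swap 6 10 * swap 7 9 * swap 8 11

/-- α₃ = (0 9)(1 11)(2 8)(3 6)(4 7)(5 10) -/
def ko1Alpha3 : Equiv.Perm (Fin 12) :=
  swap 0 9 * swap 1 11 * swap 2 8 * swap 3 6 * swap 4 7 * swap 5 10

/-- A word in the generators sending 0 to j. -/
def ko1Word : Fin 12 → Equiv.Perm (Fin 12)
  | 0 => 1
  | 1 => ko1Alpha2 * ko1Alpha1 * ko1Alpha1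
  | 2 => ko1Alpha1 * ko1Alpha1
  | 3 => ko1Alpha1
  | 4 => ko1Alpha2
  | 5 => ko1Alpha1 * ko1Alpha2
  | 6 => ko1Alpha3 * ko1Alpha1
  | 7 => ko1Alpha3 * ko1Alpha2
  | 8 => ko1Alpha3 * ko1Alpha1 * ko1Alpha1
  | 9 => ko1Alpha3
  | 10 => ko1Alpha3 * ko1Alpha1 * ko1Alpha2
  | 11 => ko1Alpha3 * ko1Alpha2 * ko1Alpha1 * ko1Alpha1

lemma ko1Word_mem (j : Fin 12) : ko1Word j ∈ Subgroup.closure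
    ({ko1Alpha1, ko1Alpha2, ko1Alpha3} : Set (Equiv.Perm (Fin 12))) := by
  have h1 : ko1Alpha1 ∈ Subgroup.closure
      ({ko1Alpha1, ko1Alpha2, ko1Alpha3} : Set (Equiv.Perm (Fin 12))) :=
    Subgroup.subset_closure (Set.mem_insert _ _)
  have h2 : ko1Alpha2 ∈ Subgroup.closure
      ({ko1Alpha1, ko1Alpha2, ko1Alpha3} : Set (Equiv.Perm (Fin 12))) :=
    Subgroup.subset_closure (Set.mem_insert_of_mem _ (Set.mem_insert _ _))
  have h3 : ko1Alpha3 ∈ Subgroup.closure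
      ({ko1Alpha1, ko1Alpha2, ko1Alpha3} : Set (Equiv.Perm (Fin 12))) :=
    Subgroup.subset_closure (Set.mem_insert_of_mem _ (Set.mem_insert_of_mem _ rfl))
  fin_cases j
  · exact one_mem _
  · exact mul_mem (mul_mem h2 h1) h1
  · exact mul_mem h1 h1
  · exact h1
  · exact h2
  · exact mul_mem h1 h2
  · exact mul_mem h3 h1
  · exact mul_mem h3 h2
  · exact mul_mem (mul_mem h3 h1) h1
  · exact h3
  · exact mul_mem (mul_mem h3 h1) h2
  · exact mul_mem (mul_mem (mul_mem h3 h2) h1) h1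

lemma ko1Word_apply (j : Fin 12) : ko1Word j 0 = j := by
  fin_cases j <;> decide

theorem stmt12 : ∀ i j : Fin 12, ∃ g ∈ Subgroup.closure
    ({ko1Alpha1, ko1Alpha2, ko1Alpha3} : Set (Equiv.Perm (Fin 12))), g i = j := by
  intro i j
  refine ⟨ko1Word j * (ko1Word i)⁻¹, mul_mem (ko1Word_mem j) (inv_mem (ko1Word_mem i)), ?_⟩
  have hi : (ko1Word i)⁻¹ i = 0 := by
    rw [Equiv.Perm.inv_def, Equiv.symm_apply_eq]
    exact (ko1Word_apply i).symm
  rw [Equiv.Perm.mul_apply, hi, ko1Word_apply]
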